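/- arXiv:2603.09726 — 3 statements merged into one kernel-verified Lean document; each statement's English description precedes it below -/
import Mathlib

section
/- For any vertex n distinct from the root and reachable from the root, the set of strict dominators of n is totally ordered by the dominance relation; consequently, if n has at least one strict dominator, there exists a unique strict dominator of n (the immediate dominator) that is dominated by every other strict dominator of n. -/
/-- A path in a directed graph `E` from `r` to `n`: a nonempty list of
vertices starting at `r`, ending at `n`, following edges of `E`. -/
def IsPath {V : Type*} (E : V → V → Prop) (r n : V) (p : List V) : Prop :=
  p ≠ [] ∧ p.head? = some r ∧ p.getLast? = some n ∧ p.Chain' E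

/-- `d` dominates `n` (w.r.t. entry `r`): every path from `r` to `n` contains `d`. -/
def Dom {V : Type*} (E : V → V → Prop) (r d n : V) : Prop :=
  ∀ p : List V, IsPath E r n p → d ∈ p

/-- `n` is reachable from `r`. -/
def Reach {V : Type*} (E : V → V → Prop) (r n : V) : Prop :=
  ∃ p, IsPath E r n p

/-- A strict dominator of `n` is a dominator of `n` distinct from `n`. -/
def StrictDom {V : Type*} (E : V → V → Prop) (r d n : V) : Prop :=
  d ≠ n ∧ Dom E r d n

/-!
Fix a path `p` from `r` to `n`. If `p = t ++ d :: s` and `x` dominates `n` without occurring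
in `s`, then `x` dominates `d`, because any path to `d` followed by `s` is a path to `n`.
Applied to the last vertex of `p` that is one of two given dominators of `n`, this compares
them; applied to the last strict dominator of `n` on `p`, it shows that this vertex is dominated
by all the others. Uniqueness comes from antisymmetry of dominance on reachable vertices: on a
path to `y`, the first occurrence of `x` or `y` ends a path that must contain the other one.
-/

namespace List

variable {α : Type*} {P : α → Prop}

theorem exists_eq_append_cons_first {l : List α} (h : ∃ x ∈ l, P x) :
    ∃ t x s, l = t ++ x :: s ∧ P x ∧ ∀ y ∈ t, ¬ P y := by
  induction l with
  | nil => simp at h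
  | cons a l ih =>
    by_cases ha : P a
    · exact ⟨[], a, l, rfl, ha, by simp⟩
    · obtain ⟨t, x, s, rfl, hx, ht⟩ := ih (by simpa [ha] using h)
      exact ⟨a :: t, x, s, rfl, hx, by simpa [ha] using ht⟩

theorem exists_eq_append_cons_last {l : List α} (h : ∃ x ∈ l, P x) :
    ∃ t x s, l = t ++ x :: s ∧ P x ∧ ∀ y ∈ s, ¬ P y := by
  obtain ⟨t, x, s, hl, hx, ht⟩ := exists_eq_append_cons_first (l := l.reverse) (by simpa using h)
  exact ⟨s.reverse, x, t.reverse, by simpa using congrArg reverse hl, hx, by simpa using ht⟩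

end List

section Dominance

variable {V : Type*} {E : V → V → Prop} {r n x y d : V} {t s : List V}

theorem isPath_append_cons_iff :
    IsPath E r n (t ++ x :: s) ↔ IsPath E r x (t ++ [x]) ∧ IsPath E x n (x :: s) := by
  have hhead : (t ++ x :: s).head? = (t ++ [x]).head? := by cases t <;> rfl
  have hlast : (t ++ x :: s).getLast? = (x :: s).getLast? := by
    rw [List.getLast?_append, List.getLast?_cons]; rfl
  simp only [IsPath, List.Chain']
  rw [hhead, hlast, List.isChain_split]
  simp only [ne_eq, List.append_eq_nil_iff, reduceCtorEq, and_false, not_false_eq_true,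
    List.getLast?_concat, List.head?_cons, true_and]
  tauto

theorem Reach.of_dom (hn : Reach E r n) (hd : Dom E r d n) : Reach E r d := by
  obtain ⟨p, hp⟩ := hn
  obtain ⟨t, s, rfl⟩ := List.append_of_mem (hd p hp)
  exact ⟨_, (isPath_append_cons_iff.mp hp).1⟩

theorem Dom.of_isPath_of_notMem (hp : IsPath E r n (t ++ d :: s)) (hx : Dom E r x n)
    (hxs : x ∉ s) : Dom E r x d := by
  intro q hq
  obtain ⟨q', rfl⟩ := List.getLast?_eq_some_iff.mp hq.2.2.1
  have hmem := hx _ (isPath_append_cons_iff.mpr ⟨hq, (isPath_append_cons_iff.mp hp).2⟩)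
  simp only [List.mem_append, List.mem_cons] at hmem ⊢
  tauto

theorem Dom.total (hn : Reach E r n) (hx : Dom E r x n) (hy : Dom E r y n) :
    Dom E r x y ∨ Dom E r y x := by
  obtain ⟨p, hp⟩ := hn
  obtain ⟨t, z, s, rfl, hz, hs⟩ :=
    List.exists_eq_append_cons_last (P := fun z => z = x ∨ z = y) ⟨x, hx _ hp, .inl rfl⟩
  rcases hz with rfl | rfl
  · exact .inr (hy.of_isPath_of_notMem hp fun h => hs _ h (.inr rfl))
  · exact .inl (hx.of_isPath_of_notMem hp fun h => hs _ h (.inl rfl))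

theorem Dom.antisymm (hy : Reach E r y) (hxy : Dom E r x y) (hyx : Dom E r y x) : x = y := by
  obtain ⟨p, hp⟩ := hy
  obtain ⟨t, z, s, rfl, hz, ht⟩ :=
    List.exists_eq_append_cons_first (P := fun z => z = x ∨ z = y)
      ⟨y, List.mem_of_getLast? hp.2.2.1, .inr rfl⟩
  have hpre := (isPath_append_cons_iff.mp hp).1
  rcases hz with rfl | rfl
  · have := hyx _ hpre
    simp only [List.mem_append, List.mem_singleton] at this
    exact (this.resolve_left fun h => ht y h (.inr rfl)).symm
  · have := hxy _ hpre
    simp only [List.mem_append, List.mem_singleton] at this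
    exact this.resolve_left fun h => ht x h (.inl rfl)

theorem exists_strictDom_dominated_by_all (hn : Reach E r n) (h : ∃ d, StrictDom E r d n) :
    ∃ b, StrictDom E r b n ∧ ∀ d, StrictDom E r d n → Dom E r d b := by
  obtain ⟨p, hp⟩ := hn
  obtain ⟨d₀, hd₀⟩ := h
  obtain ⟨t, b, s, rfl, hb, hs⟩ :=
    List.exists_eq_append_cons_last (P := (StrictDom E r · n)) ⟨d₀, hd₀.2 _ hp, hd₀⟩
  exact ⟨b, hb, fun d hd => hd.2.of_isPath_of_notMem hp fun h => hs d h hd⟩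

end Dominance

theorem strict_dominators_totally_ordered_and_idom_unique_general
    {V : Type*} (E : V → V → Prop) (r n : V)
    (hreach : Reach E r n) :
    (∀ d₁ d₂, StrictDom E r d₁ n → StrictDom E r d₂ n →
      Dom E r d₁ d₂ ∨ Dom E r d₂ d₁) ∧
    ((∃ d, StrictDom E r d n) →
      ∃! b, StrictDom E r b n ∧
        ∀ d, StrictDom E r d n → d ≠ b → Dom E r d b) := by
  refine ⟨fun d₁ d₂ h₁ h₂ => Dom.total hreach h₁.2 h₂.2, fun h => ?_⟩
  obtain ⟨b, hb, hb_dom⟩ := exists_strictDom_dominated_by_all hreach h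
  refine ⟨b, ⟨hb, fun d hd _ => hb_dom d hd⟩, fun b' ⟨hb', hb'_dom⟩ => ?_⟩
  by_contra hne
  exact hne (Dom.antisymm (hreach.of_dom hb.2) (hb_dom b' hb') (hb'_dom b hb fun h => hne h.symm))

/-- For a vertex `n ≠ r` reachable from the root, the strict dominators of
`n` are totally ordered by dominance; hence if `n` has at least one strict
dominator, there is a unique strict dominator of `n` dominated by every
other strict dominator of `n` (the immediate dominator). -/
theorem strict_dominators_totally_ordered_and_idom_unique
    {V : Type*} (E : V → V → Prop) (r n : V)
    (hn : n ≠ r) (hreach : Reach E r n) :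
    (∀ d₁ d₂, StrictDom E r d₁ n → StrictDom E r d₂ n →
      Dom E r d₁ d₂ ∨ Dom E r d₂ d₁) ∧
    ((∃ d, StrictDom E r d n) →
      ∃! b, StrictDom E r b n ∧
        ∀ d, StrictDom E r d n → d ≠ b → Dom E r d b) :=
  strict_dominators_totally_ordered_and_idom_unique_general E r n hreach
end

section
/- If a set of vertices V_s in a rooted directed CFG contains a vertex b_entry that dominates every vertex of V_s, then the reconstructed edge set E_s, obtained by the transposition rule (keep edges between vertices of V_s) and the attraction rule (for an edge b0 → b1 with b1 ∈ V_s and b0 ∉ V_s, add the edge fd(b0) → b1 where fd(b0) is the first dominator of b0 in V_s, assumed to exist), yields a graph on V_s in which every vertex of V_s is reachable from b_entry, provided every vertex of V_s is reachable from the entry of the original graph. -/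
/-- `b₁` is the first dominator of `b₀` within `Vs`. -/
def FirstDom {V : Type*} (E : V → V → Prop) (r : V) (Vs : Set V) (b₀ b₁ : V) : Prop :=
  b₁ ∈ Vs ∧ Dom E r b₁ b₀ ∧
    ∀ b₂ ∈ Vs, b₂ ≠ b₁ → Dom E r b₂ b₀ → Dom E r b₂ b₁

/-- The reconstructed edge relation on the slice region `Vs`:
transposition keeps edges between vertices of `Vs`; attraction redirects an
edge `b₀ → b₁` with `b₁ ∈ Vs` and `b₀ ∉ Vs` to `fd → b₁`, where `fd` is the
first dominator of `b₀` in `Vs`. -/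
def SliceEdge {V : Type*} (E : V → V → Prop) (r : V) (Vs : Set V) (a b : V) : Prop :=
  (a ∈ Vs ∧ b ∈ Vs ∧ E a b) ∨
  (b ∈ Vs ∧ ∃ b₀, b₀ ∉ Vs ∧ E b₀ b ∧ FirstDom E r Vs b₀ a)

/-!
Follow a path from `r` to `v` and show, by induction along it, that every vertex of `Vs` on the
path is reached from `b_entry` in the slice graph. The path can only start inside `Vs` at
`r = b_entry`. For a later vertex `v ∈ Vs` with predecessor `u`, either `u ∈ Vs` and the edge
`u → v` is kept, or `u ∉ Vs`; then the first dominator `fd` of `u` in `Vs` lies on the path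
before `u`, so it is already reached, and the attraction edge `fd → v` finishes.
-/

section

variable {V : Type*} {E : V → V → Prop} {r : V}

theorem isPath_singleton (v : V) : IsPath E v v [v] :=
  ⟨List.cons_ne_nil _ _, rfl, rfl, List.isChain_singleton _⟩

theorem Dom.eq_of_root {d : V} (h : Dom E r d r) : d = r :=
  List.mem_singleton.mp (h _ (isPath_singleton r))

theorem IsPath.mem {n : V} {p : List V} (hp : IsPath E r n p) : n ∈ p :=
  List.mem_of_getLast? hp.2.2.1

theorem IsPath.eq_of_singleton {n u : V} (hp : IsPath E r n [u]) : r = u ∧ n = u := by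
  obtain ⟨-, hhead, hlast, -⟩ := hp
  simp_all

theorem IsPath.of_append_singleton {n v : V} {q : List V} (hq : q ≠ [])
    (hp : IsPath E r n (q ++ [v])) :
    n = v ∧ IsPath E r (q.getLast hq) q ∧ E (q.getLast hq) v := by
  obtain ⟨-, hhead, hlast, hchain⟩ := hp
  have hqlast : q.getLast? = some (q.getLast hq) := List.getLast?_eq_getLast_of_ne_nil hq
  obtain ⟨hqchain, -, hjoin⟩ := List.isChain_append.mp hchain
  refine ⟨by simpa using hlast.symm, ⟨hq, ?_, hqlast, hqchain⟩, hjoin _ hqlast _ rfl⟩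
  rwa [List.head?_append_of_ne_nil _ hq] at hhead

theorem IsPath.reflTransGen_sliceEdge {Vs : Set V} {b_entry : V}
    (hdom : ∀ v ∈ Vs, Dom E r b_entry v)
    (hfd : ∀ b₀ b₁, b₀ ∉ Vs → b₁ ∈ Vs → E b₀ b₁ → ∃ fd, FirstDom E r Vs b₀ fd)
    {n : V} {p : List V} (hp : IsPath E r n p) :
    ∀ x ∈ p, x ∈ Vs → Relation.ReflTransGen (SliceEdge E r Vs) b_entry x := by
  induction p using List.reverseRecOn generalizing n with
  | nil => exact absurd rfl hp.1
  | append_singleton q v ih =>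
    rcases eq_or_ne q [] with rfl | hq
    · obtain ⟨rfl, -⟩ := hp.eq_of_singleton
      intro x hx hxVs
      obtain rfl : x = r := by simpa using hx
      rw [(hdom x hxVs).eq_of_root]
    obtain ⟨rfl, hq_path, hE⟩ := hp.of_append_singleton hq
    intro x hx hxVs
    rcases List.mem_append.mp hx with hxq | hxv
    · exact ih hq_path x hxq hxVs
    obtain rfl := List.mem_singleton.mp hxv
    by_cases hu : q.getLast hq ∈ Vs
    · exact (ih hq_path _ hq_path.mem hu).tail (Or.inl ⟨hu, hxVs, hE⟩)
    · obtain ⟨fd, hfd_first⟩ := hfd _ x hu hxVs hE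
      exact (ih hq_path fd (hfd_first.2.1 q hq_path) hfd_first.1).tail
        (Or.inr ⟨hxVs, _, hu, hE, hfd_first⟩)

end

theorem slice_region_reachable_from_entry_general
    {V : Type*} (E : V → V → Prop) (r : V) (Vs : Set V) (b_entry : V)
    (hreach : ∀ v : V, Reach E r v)
    (hdom : ∀ v ∈ Vs, Dom E r b_entry v)
    (hfd : ∀ b₀ b₁, b₀ ∉ Vs → b₁ ∈ Vs → E b₀ b₁ →
      ∃ fd, FirstDom E r Vs b₀ fd) :
    ∀ v ∈ Vs, Relation.ReflTransGen (SliceEdge E r Vs) b_entry v := by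
  intro v hv
  obtain ⟨p, hp⟩ := hreach v
  exact hp.reflTransGen_sliceEdge hdom hfd v hp.mem hv

/-- If `Vs` contains a vertex `b_entry` dominating every vertex of `Vs`,
every vertex of the graph is reachable from the entry `r`, and first
dominators in `Vs` exist where needed, then in the reconstructed graph
(transposition + attraction) every vertex of `Vs` is reachable from
`b_entry`. -/
theorem slice_region_reachable_from_entry
    {V : Type*} (E : V → V → Prop) (r : V) (Vs : Set V) (b_entry : V)
    (hreach : ∀ v : V, Reach E r v)
    (hentry : b_entry ∈ Vs)
    (hdom : ∀ v ∈ Vs, Dom E r b_entry v)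
    (hfd : ∀ b₀ b₁, b₀ ∉ Vs → b₁ ∈ Vs → E b₀ b₁ →
      ∃ fd, FirstDom E r Vs b₀ fd) :
    ∀ v ∈ Vs, Relation.ReflTransGen (SliceEdge E r Vs) b_entry v :=
  slice_region_reachable_from_entry_general E r Vs b_entry hreach hdom hfd
end

section
/- Let G be a finite rooted directed graph with entry r in which every vertex is reachable from r. For the dominance relation, the immediate-dominator function idom (defined for all vertices other than r) induces a tree on the vertex set: the relation 'n is a child of idom(n)' is acyclic and every vertex other than r has a unique path of idom-steps leading to r. -/
/-- One idom-step: from a non-root vertex to its immediate dominator. -/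
def IdomStep {V : Type*} (r : V) (idom : V → V) (a b : V) : Prop :=
  a ≠ r ∧ b = idom a

/-!
Dominance is transitive, and antisymmetric on reachable vertices: if `m ≠ n` dominate each
other, every path to `n` passes through `m` before its end, and the prefix up to `m` passes
through `n`, which gives a strictly shorter path to `n`; so no path to `n` exists. Hence strict
dominance is a strict order, well founded because `V` is finite. Every idom-step goes strictly
down in it, so there is no cycle of idom-steps, and following idom-steps from any vertex
must stop, which only happens at `r`.
-/

open Relation

section

variable {V : Type*} {E : V → V → Prop} {r : V}

lemma IsPath.exists_prefix {m n : V} {p : List V} (hp : IsPath E r n p) (hm : m ∈ p) :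
    ∃ q, q <+: p ∧ IsPath E r m q ∧ (m ≠ n → q.length < p.length) := by
  obtain ⟨l₁, l₂, rfl⟩ := List.append_of_mem hm
  obtain ⟨-, hhead, hlast, hchain⟩ := hp
  have hpre : l₁ ++ [m] <+: l₁ ++ m :: l₂ := ⟨l₂, by simp⟩
  refine ⟨l₁ ++ [m], hpre, ⟨by simp, ?_, by simp, List.IsChain.prefix hchain hpre⟩, ?_⟩
  · simpa [List.head?_append] using hhead
  · intro hmn
    cases l₂ with
    | nil => simp_all
    | cons => simp

lemma Dom.trans {d m n : V} (hdm : Dom E r d m) (hmn : Dom E r m n) : Dom E r d n := by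
  intro p hp
  obtain ⟨q, hq, hqm, -⟩ := hp.exists_prefix (hmn p hp)
  exact hq.subset (hdm q hqm)

lemma not_isPath_of_dom_of_dom {m n : V} (hne : m ≠ n) (hmn : Dom E r m n) (hnm : Dom E r n m) :
    ∀ p, ¬ IsPath E r n p
  | p, hp => by
    obtain ⟨q, -, hq, hqp⟩ := hp.exists_prefix (hmn p hp)
    obtain ⟨q', -, hq', hq'q⟩ := hq.exists_prefix (hnm q hq)
    have : q'.length < p.length := (hq'q hne.symm).trans (hqp hne)
    exact not_isPath_of_dom_of_dom hne hmn hnm q' hq'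
termination_by p => p.length

lemma Dom.antisymm_s10 {m n : V} (hmn : Dom E r m n) (hnm : Dom E r n m) (hn : Reach E r n) :
    m = n := by
  by_contra hne
  obtain ⟨p, hp⟩ := hn
  exact not_isPath_of_dom_of_dom hne hmn hnm p hp

lemma StrictDom.trans {d m n : V} (hn : Reach E r n) (hdm : StrictDom E r d m)
    (hmn : StrictDom E r m n) : StrictDom E r d n := by
  refine ⟨?_, hdm.2.trans hmn.2⟩
  rintro rfl
  exact hmn.1 (hmn.2.antisymm_s10 hdm.2 hn)

lemma isStrictOrder_strictDom (hreach : ∀ v, Reach E r v) : IsStrictOrder V (StrictDom E r) where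
  irrefl _ h := h.1 rfl
  trans _ _ n := StrictDom.trans (hreach n)

lemma wellFounded_strictDom [Finite V] (hreach : ∀ v, Reach E r v) :
    WellFounded (StrictDom E r) :=
  have := isStrictOrder_strictDom hreach
  Finite.wellFounded_of_trans_of_irrefl _

section

variable {f : V → V} {s : V → V → Prop}

lemma IdomStep.rel_of_transGen [IsTrans V s] (hf : ∀ a, a ≠ r → s (f a) a) {a b : V}
    (h : TransGen (IdomStep r f) a b) : s b a := by
  induction h with
  | single hab => exact hab.2 ▸ hf _ hab.1
  | tail _ hbc ih => exact _root_.trans (hbc.2 ▸ hf _ hbc.1) ih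

lemma IdomStep.reflTransGen_root (hs : WellFounded s) (hf : ∀ a, a ≠ r → s (f a) a) (a : V) :
    ReflTransGen (IdomStep r f) a r := by
  induction a using hs.induction with
  | _ a ih =>
    by_cases ha : a = r
    · exact ha ▸ ReflTransGen.refl
    · exact ReflTransGen.head ⟨ha, rfl⟩ (ih (f a) (hf a ha))

end

end

/-- In a finite rooted directed graph where every vertex is reachable from
the root `r`, the immediate-dominator function induces a tree: the
child-of relation is acyclic, and every vertex reaches `r` by a (unique
path of) idom-steps. -/
theorem idom_induces_tree
    {V : Type*} [Fintype V] (E : V → V → Prop) (r : V)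
    (hreach : ∀ v : V, Reach E r v)
    (idom : V → V)
    (hidom : ∀ n, n ≠ r → StrictDom E r (idom n) n ∧
      ∀ d, StrictDom E r d n → d ≠ idom n → Dom E r d (idom n)) :
    (∀ n : V, ¬ Relation.TransGen (IdomStep r idom) n n) ∧
    (∀ n : V, Relation.ReflTransGen (IdomStep r idom) n r) := by
  have hstep (n : V) (hn : n ≠ r) : StrictDom E r (idom n) n := (hidom n hn).1
  have := isStrictOrder_strictDom hreach
  exact ⟨fun n h => irrefl n (IdomStep.rel_of_transGen hstep h),
    IdomStep.reflTransGen_root (wellFounded_strictDom hreach) hstep⟩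
end
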